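/- Let (χ_k) be the Haar system on [0,1], let δ > 0, and set d_k = 1/(log(k+1))^{1+δ} for k ≥ 1. Then there exists a constant M > 0 such that for every N ≥ 2 and every sequence ε = (ε_n) with ε_n ∈ {-1,0,1}, one has D_N(ε) = (1/N) Σ_{i=1}^{N−1} |∫_0^{i/N} Σ_{k=1}^N d_k k^{1/2} ε_k χ_k(x) dx| ≤ M. -/

import Mathlib

/-!
Integrating term by term, `∫₀ᵗ Q_N = ∑ d_k √k ε_k ∫₀ᵗ χ_k`. For `2^s < k ≤ 2^(s+1)` the primitive
of `χ_k` is a tent of height `2^(s/2) / 2^(s+1)` on the support of `χ_k`, so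
`√k |∫₀ᵗ χ_k| ≤ 1`; and the supports within one dyadic block are disjoint, so at most one `k` of
each block contributes. Block `s` therefore contributes at most `max d_k ≲ (s+1)^(-(1+δ))`, which
is summable. Hence `|∫₀ᵗ Q_N|` is bounded uniformly in `t ∈ [0,1]`, `N` and `ε`, and so is `D_N`,
which is at most the largest of `N - 1` such values.
-/

open MeasureTheory Set Filter

noncomputable section

/-- The Haar system on `[0,1]`: `haarFn 1 = 1`, and for `k = 2^s + l` with
`s ≥ 0`, `1 ≤ l ≤ 2^s`, it takes the values `2^{s/2}`, `-2^{s/2}`, `0` on the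
corresponding intervals. -/
def haarFn (k : ℕ) (x : ℝ) : ℝ :=
  if k = 0 then 0
  else if k = 1 then 1
  else
    let s := Nat.log 2 (k - 1)
    let l := k - 2 ^ s
    if (2 * (l:ℝ) - 2) / 2 ^ (s + 1) < x ∧ x < (2 * (l:ℝ) - 1) / 2 ^ (s + 1) then
      Real.sqrt (2 ^ s)
    else if (2 * (l:ℝ) - 1) / 2 ^ (s + 1) < x ∧ x < (2 * (l:ℝ)) / 2 ^ (s + 1) then
      -Real.sqrt (2 ^ s)
    else 0

/-- `Q_N(x, ε) = ∑_{k=1}^N d_k k^{1/2} ε_k φ_k(x)`. -/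
def QN (φ : ℕ → ℝ → ℝ) (d ε : ℕ → ℝ) (N : ℕ) (x : ℝ) : ℝ :=
  ∑ k ∈ Finset.Icc 1 N, d k * Real.sqrt k * ε k * φ k x

/-- `D_N(ε) = (1/N) ∑_{i=1}^{N-1} |∫_0^{i/N} Q_N(x, ε) dx|`. -/
def DN (φ : ℕ → ℝ → ℝ) (d ε : ℕ → ℝ) (N : ℕ) : ℝ :=
  (1 / (N:ℝ)) * ∑ i ∈ Finset.Icc 1 (N - 1), |∫ x in (0:ℝ)..((i:ℝ)/(N:ℝ)), QN φ d ε N x|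

def haarStep (a b c x : ℝ) : ℝ := (Ioo a b).indicator 1 x - (Ioo b c).indicator 1 x

lemma integrable_indicator_Ioo_one (a b : ℝ) : Integrable ((Ioo a b).indicator (1 : ℝ → ℝ)) :=
  (integrableOn_const measure_Ioo_lt_top.ne).integrable_indicator measurableSet_Ioo

lemma integral_indicator_Ioo_one {a b t : ℝ} (ht : 0 ≤ t) :
    ∫ x in (0:ℝ)..t, (Ioo a b).indicator 1 x = volume.real (Ioo a b ∩ Ioc 0 t) := by
  rw [intervalIntegral.integral_of_le ht, integral_indicator_one measurableSet_Ioo,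
    measureReal_restrict_apply measurableSet_Ioo]

section HaarStep

variable {a b c t : ℝ}

lemma integral_haarStep (ht : 0 ≤ t) :
    ∫ x in (0:ℝ)..t, haarStep a b c x
      = volume.real (Ioo a b ∩ Ioc 0 t) - volume.real (Ioo b c ∩ Ioc 0 t) := by
  rw [← integral_indicator_Ioo_one ht, ← integral_indicator_Ioo_one ht,
    ← intervalIntegral.integral_sub (integrable_indicator_Ioo_one a b).intervalIntegrable
      (integrable_indicator_Ioo_one b c).intervalIntegrable]
  rfl

lemma abs_integral_haarStep_le (hab : a ≤ b) (hbc : c - b = b - a) (ht : 0 ≤ t) :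
    |∫ x in (0:ℝ)..t, haarStep a b c x| ≤ b - a := by
  have hle : ∀ {u v : ℝ}, u ≤ v → volume.real (Ioo u v ∩ Ioc 0 t) ≤ v - u := fun huv =>
    (measureReal_mono inter_subset_left measure_Ioo_lt_top.ne).trans
      (Real.volume_real_Ioo_of_le huv).le
  have h₁ := hle hab
  have h₂ := hle (show b ≤ c by linarith)
  rw [integral_haarStep ht, abs_sub_le_iff]
  constructor <;> linarith [measureReal_nonneg (μ := volume) (s := Ioo a b ∩ Ioc 0 t),
    measureReal_nonneg (μ := volume) (s := Ioo b c ∩ Ioc 0 t)]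

lemma integral_haarStep_eq_zero (ha : 0 ≤ a) (hab : a ≤ b) (hbc : c - b = b - a)
    (ht : 0 ≤ t) (h : t ≤ a ∨ c ≤ t) : ∫ x in (0:ℝ)..t, haarStep a b c x = 0 := by
  rw [integral_haarStep ht]
  rcases h with h | h
  · have hempty : ∀ {u v : ℝ}, a ≤ u → Ioo u v ∩ Ioc 0 t = ∅ := fun hu =>
      eq_empty_of_forall_notMem fun x ⟨⟨hux, _⟩, _, hxt⟩ => by linarith
    rw [hempty le_rfl, hempty hab, sub_self]
  · have hfull : ∀ {u v : ℝ}, 0 ≤ u → v ≤ t → Ioo u v ∩ Ioc 0 t = Ioo u v :=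
      fun hu hv => inter_eq_left.2 fun x ⟨hux, hxv⟩ => ⟨by linarith, by linarith⟩
    rw [hfull ha (by linarith), hfull (by linarith) h, Real.volume_real_Ioo_of_le hab,
      Real.volume_real_Ioo_of_le (by linarith), hbc, sub_self]

end HaarStep

-- For `k = 2^s + l` with `1 ≤ l ≤ 2^s`: `haarLevel k = s`, `haarPos k = l`, and `χ_k` is `2^(s/2)`
-- on `(haarLeft k, haarMid k)` and `-2^(s/2)` on `(haarMid k, haarRight k)`.
def haarLevel (k : ℕ) : ℕ := Nat.log 2 (k - 1)

def haarPos (k : ℕ) : ℕ := k - 2 ^ haarLevel k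

def haarLeft (k : ℕ) : ℝ := (2 * (haarPos k : ℝ) - 2) / 2 ^ (haarLevel k + 1)

def haarMid (k : ℕ) : ℝ := (2 * (haarPos k : ℝ) - 1) / 2 ^ (haarLevel k + 1)

def haarRight (k : ℕ) : ℝ := 2 * (haarPos k : ℝ) / 2 ^ (haarLevel k + 1)

section Haar

variable {k : ℕ}

lemma two_pow_haarLevel_lt (hk : 2 ≤ k) : 2 ^ haarLevel k < k :=
  (Nat.pow_log_le_self 2 (Nat.sub_ne_zero_of_lt hk)).trans_lt
    (Nat.sub_one_lt (Nat.ne_zero_of_lt hk))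

lemma le_two_pow_haarLevel_succ (k : ℕ) : k ≤ 2 ^ (haarLevel k + 1) :=
  Nat.le_of_pred_lt (Nat.lt_pow_succ_log_self (by norm_num) _)

lemma clog_two_eq_haarLevel_add_one (hk : 2 ≤ k) : Nat.clog 2 k = haarLevel k + 1 :=
  le_antisymm (Nat.clog_le_of_le_pow (le_two_pow_haarLevel_succ k))
    ((Nat.lt_clog_iff_pow_lt (by norm_num)).2 (two_pow_haarLevel_lt hk))

lemma haarPos_pos (hk : 2 ≤ k) : 0 < haarPos k := by
  have := two_pow_haarLevel_lt hk
  unfold haarPos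
  omega

lemma haarLeft_nonneg (hk : 2 ≤ k) : 0 ≤ haarLeft k := by
  have : (1 : ℝ) ≤ haarPos k := by exact_mod_cast haarPos_pos hk
  exact div_nonneg (by linarith) (by positivity)

lemma haarMid_sub_haarLeft (k : ℕ) : haarMid k - haarLeft k = 1 / 2 ^ (haarLevel k + 1) := by
  unfold haarMid haarLeft
  ring

lemma haarRight_sub_haarMid (k : ℕ) : haarRight k - haarMid k = haarMid k - haarLeft k := by
  unfold haarRight haarMid haarLeft
  ring

lemma haarLeft_le_haarMid (k : ℕ) : haarLeft k ≤ haarMid k := by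
  have := haarMid_sub_haarLeft k
  have : (0 : ℝ) < 1 / 2 ^ (haarLevel k + 1) := by positivity
  linarith

lemma haarFn_one : haarFn 1 = fun _ => 1 := by
  ext x
  simp [haarFn]

lemma haarFn_eq_haarStep (hk : 2 ≤ k) :
    haarFn k = fun x => √(2 ^ haarLevel k) * haarStep (haarLeft k) (haarMid k) (haarRight k) x := by
  ext x
  simp only [haarFn, if_neg (show k ≠ 0 by omega), if_neg (show k ≠ 1 by omega)]
  change (if haarLeft k < x ∧ x < haarMid k then √(2 ^ haarLevel k)
    else if haarMid k < x ∧ x < haarRight k then -√(2 ^ haarLevel k) else 0) = _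
  simp only [haarStep, indicator_apply, mem_Ioo, Pi.one_apply]
  split_ifs with h₁ h₂ <;> first | exact absurd h₂.1 (not_lt.2 h₁.2.le) | ring

lemma intervalIntegrable_haarFn (hk : 1 ≤ k) (u v : ℝ) :
    IntervalIntegrable (haarFn k) volume u v := by
  rcases hk.eq_or_lt with rfl | hk
  · rw [haarFn_one]
    exact intervalIntegrable_const
  · rw [haarFn_eq_haarStep hk]
    exact (((integrable_indicator_Ioo_one _ _).sub
      (integrable_indicator_Ioo_one _ _)).const_mul _).intervalIntegrable

end Haar

section HaarIntegral

variable {k : ℕ} {t : ℝ}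

lemma sqrt_mul_abs_integral_haarFn_le_one (hk : 1 ≤ k) (ht₀ : 0 ≤ t) (ht₁ : t ≤ 1) :
    √k * |∫ x in (0:ℝ)..t, haarFn k x| ≤ 1 := by
  rcases hk.eq_or_lt with rfl | hk
  · simpa [haarFn_one, abs_of_nonneg ht₀] using ht₁
  set s := haarLevel k
  have hstep := abs_integral_haarStep_le (haarLeft_le_haarMid k) (haarRight_sub_haarMid k) ht₀
  rw [haarMid_sub_haarLeft] at hstep
  have hk2 : (k : ℝ) ≤ 2 ^ (s + 1) := by exact_mod_cast le_two_pow_haarLevel_succ k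
  have hsqrt : √((k : ℝ) * 2 ^ s) ≤ 2 ^ (s + 1) := by
    rw [Real.sqrt_le_iff]
    refine ⟨by positivity, ?_⟩
    calc (k : ℝ) * 2 ^ s ≤ 2 ^ (s + 1) * 2 ^ (s + 1) := by gcongr <;> norm_num
      _ = (2 ^ (s + 1)) ^ 2 := by ring
  rw [haarFn_eq_haarStep hk, intervalIntegral.integral_const_mul, abs_mul,
    abs_of_nonneg (Real.sqrt_nonneg _)]
  calc √k * (√(2 ^ s) * |∫ x in (0:ℝ)..t, haarStep (haarLeft k) (haarMid k) (haarRight k) x|)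
      ≤ √k * (√(2 ^ s) * (1 / 2 ^ (s + 1))) := by gcongr
    _ = √((k : ℝ) * 2 ^ s) / 2 ^ (s + 1) := by
      rw [Real.sqrt_mul (Nat.cast_nonneg k)]
      ring
    _ ≤ 1 := (div_le_one (by positivity)).2 hsqrt

lemma mem_Ioo_of_integral_haarFn_ne_zero (hk : 2 ≤ k) (ht : 0 ≤ t)
    (h : ∫ x in (0:ℝ)..t, haarFn k x ≠ 0) : t ∈ Ioo (haarLeft k) (haarRight k) := by
  by_contra hout
  rw [mem_Ioo, not_and_or, not_lt, not_lt] at hout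
  rw [haarFn_eq_haarStep hk, intervalIntegral.integral_const_mul,
    integral_haarStep_eq_zero (haarLeft_nonneg hk) (haarLeft_le_haarMid k)
      (haarRight_sub_haarMid k) ht hout, mul_zero] at h
  exact h rfl

lemma haarPos_eq_of_mem_Ioo {k' : ℕ} (hs : haarLevel k = haarLevel k')
    (h : t ∈ Ioo (haarLeft k) (haarRight k)) (h' : t ∈ Ioo (haarLeft k') (haarRight k')) :
    haarPos k = haarPos k' := by
  have hP : (0 : ℝ) < 2 ^ (haarLevel k + 1) := by positivity
  have hle : ∀ {m n : ℕ}, haarLevel m = haarLevel k → haarLevel n = haarLevel k →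
      haarLeft m < haarRight n → haarPos m ≤ haarPos n := fun {m n} hm hn hlt => by
    rw [haarLeft, haarRight, hm, hn, div_lt_div_iff_of_pos_right hP] at hlt
    have : (haarPos m : ℝ) < haarPos n + 1 := by linarith
    exact_mod_cast Nat.lt_succ_iff.1 (by exact_mod_cast this)
  exact le_antisymm (hle rfl hs.symm (h.1.trans h'.2)) (hle hs.symm rfl (h'.1.trans h.2))

lemma eq_of_integral_haarFn_ne_zero {k' : ℕ} (hk : 1 ≤ k) (hk' : 1 ≤ k')
    (hclog : Nat.clog 2 k = Nat.clog 2 k') (ht : 0 ≤ t)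
    (h : ∫ x in (0:ℝ)..t, haarFn k x ≠ 0) (h' : ∫ x in (0:ℝ)..t, haarFn k' x ≠ 0) :
    k = k' := by
  have hclog_pos : ∀ {m : ℕ}, 2 ≤ m → 0 < Nat.clog 2 m := Nat.clog_pos one_lt_two
  rcases hk.eq_or_lt with rfl | hk
  · by_contra hne
    have := hclog_pos (show 2 ≤ k' by omega)
    rw [Nat.clog_one_right] at hclog
    omega
  rcases hk'.eq_or_lt with rfl | hk'
  · have := hclog_pos hk
    rw [Nat.clog_one_right] at hclog
    omega
  have hs : haarLevel k = haarLevel k' := by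
    rw [clog_two_eq_haarLevel_add_one hk, clog_two_eq_haarLevel_add_one hk'] at hclog
    omega
  have hl := haarPos_eq_of_mem_Ioo hs (mem_Ioo_of_integral_haarFn_ne_zero hk ht h)
    (mem_Ioo_of_integral_haarFn_ne_zero hk' ht h')
  have h₁ := two_pow_haarLevel_lt hk
  have h₂ := two_pow_haarLevel_lt hk'
  rw [haarPos, haarPos, hs] at hl
  rw [hs] at h₁
  omega

end HaarIntegral

section Weights

variable {k : ℕ}

lemma two_pow_clog_two_lt (hk : 1 ≤ k) : 2 ^ Nat.clog 2 k < 2 * k := by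
  rcases hk.eq_or_lt with rfl | hk
  · simp
  have hlt := Nat.pow_pred_clog_lt_self one_lt_two hk
  have hpos := Nat.clog_pos one_lt_two hk
  calc 2 ^ Nat.clog 2 k = 2 * 2 ^ (Nat.clog 2 k).pred := by
        rw [← pow_succ', Nat.pred_eq_sub_one, Nat.sub_add_cancel hpos]
    _ < 2 * k := by omega

lemma clog_two_add_one_mul_log_two_le (hk : 1 ≤ k) :
    ((Nat.clog 2 k : ℝ) + 1) * Real.log 2 ≤ 2 * Real.log ((k : ℝ) + 1) := by
  have hnat : 2 ^ (Nat.clog 2 k + 1) ≤ (k + 1) ^ 2 := by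
    have := two_pow_clog_two_lt hk
    rw [pow_succ]
    nlinarith
  have hreal : (2 : ℝ) ^ (Nat.clog 2 k + 1) ≤ ((k : ℝ) + 1) ^ 2 := by exact_mod_cast hnat
  have := Real.log_le_log (by positivity) hreal
  rw [Real.log_pow, Real.log_pow] at this
  push_cast at this
  linarith

lemma abs_one_div_log_rpow_le (hk : 1 ≤ k) {p : ℝ} (hp : 0 ≤ p) :
    |1 / Real.log ((k : ℝ) + 1) ^ p| ≤ (2 / Real.log 2) ^ p / ((Nat.clog 2 k : ℝ) + 1) ^ p := by
  have hL : 0 < Real.log ((k : ℝ) + 1) := Real.log_pos (by norm_cast; omega)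
  have hlog2 : 0 < Real.log 2 := Real.log_pos one_lt_two
  have hinv : (Real.log ((k : ℝ) + 1))⁻¹ ≤ 2 / Real.log 2 / ((Nat.clog 2 k : ℝ) + 1) := by
    rw [div_div, inv_eq_one_div, div_le_div_iff₀ hL (by positivity)]
    linarith [clog_two_add_one_mul_log_two_le hk]
  rw [abs_of_nonneg (by positivity), one_div, ← Real.inv_rpow hL.le,
    ← Real.div_rpow (by positivity) (by positivity)]
  exact Real.rpow_le_rpow (inv_nonneg.2 hL.le) hinv hp

end Weights

theorem Finset.sum_le_of_forall_le_of_ne_zero_unique {ι M : Type*} [AddCommMonoid M]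
    [Preorder M] {s : Finset ι} {f : ι → M} {C : M} (hC : 0 ≤ C) (hf : ∀ i ∈ s, f i ≤ C)
    (huniq : ∀ i ∈ s, ∀ j ∈ s, f i ≠ 0 → f j ≠ 0 → i = j) : ∑ i ∈ s, f i ≤ C := by
  by_cases h : ∃ i ∈ s, f i ≠ 0
  · obtain ⟨i, hi, hfi⟩ := h
    rw [Finset.sum_eq_single_of_mem i hi fun j hj hji => by_contra fun hfj =>
      hji (huniq j hj i hi hfj hfi)]
    exact hf i hi
  · push Not at h
    rwa [Finset.sum_eq_zero h]

lemma integral_QN {φ : ℕ → ℝ → ℝ} {d ε : ℕ → ℝ} {N : ℕ} {t : ℝ}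
    (hφ : ∀ k ∈ Finset.Icc 1 N, IntervalIntegrable (φ k) volume 0 t) :
    ∫ x in (0:ℝ)..t, QN φ d ε N x
      = ∑ k ∈ Finset.Icc 1 N, d k * √k * ε k * ∫ x in (0:ℝ)..t, φ k x := by
  unfold QN
  rw [intervalIntegral.integral_finsetSum fun k hk => (hφ k hk).const_mul _]
  simp only [intervalIntegral.integral_const_mul]

-- Block `j = Nat.clog 2 k` is `{1}` for `j = 0` and `2^(j-1) < k ≤ 2^j` otherwise.
theorem abs_integral_QN_haarFn_le {d ε D : ℕ → ℝ} {t : ℝ} (hD : ∀ j, 0 ≤ D j)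
    (hd : ∀ k, 1 ≤ k → |d k| ≤ D (Nat.clog 2 k)) (hε : ∀ k, |ε k| ≤ 1)
    (ht₀ : 0 ≤ t) (ht₁ : t ≤ 1) (N : ℕ) :
    |∫ x in (0:ℝ)..t, QN haarFn d ε N x| ≤ ∑ j ∈ Finset.range (N + 1), D j := by
  set term := fun k => |d k * √k * ε k * ∫ x in (0:ℝ)..t, haarFn k x|
  have hmaps : ∀ k ∈ Finset.Icc 1 N, Nat.clog 2 k ∈ Finset.range (N + 1) := fun k hk => by
    have := Nat.clog_le_of_le_pow (Nat.lt_two_pow_self (n := k)).le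
    simp only [Finset.mem_Icc, Finset.mem_range] at hk ⊢
    omega
  have hblock : ∀ j, ∑ k ∈ Finset.Icc 1 N with Nat.clog 2 k = j, term k ≤ D j := fun j => by
    refine Finset.sum_le_of_forall_le_of_ne_zero_unique (hD j) (fun k hk => ?_) ?_
    · simp only [Finset.mem_filter, Finset.mem_Icc] at hk
      obtain ⟨⟨hk1, -⟩, rfl⟩ := hk
      calc term k = |d k| * |ε k| * (√k * |∫ x in (0:ℝ)..t, haarFn k x|) := by
            simp only [term, abs_mul, abs_of_nonneg (Real.sqrt_nonneg (k : ℝ))]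
            ring
        _ ≤ D (Nat.clog 2 k) * 1 * 1 :=
            mul_le_mul (mul_le_mul (hd k hk1) (hε k) (abs_nonneg _) (hD _))
              (sqrt_mul_abs_integral_haarFn_le_one hk1 ht₀ ht₁) (by positivity)
              (mul_nonneg (hD _) zero_le_one)
        _ = D (Nat.clog 2 k) := by ring
    · intro k hk k' hk' hne hne'
      simp only [Finset.mem_filter, Finset.mem_Icc] at hk hk'
      exact eq_of_integral_haarFn_ne_zero hk.1.1 hk'.1.1 (hk.2.trans hk'.2.symm) ht₀
        (right_ne_zero_of_mul (abs_ne_zero.1 hne)) (right_ne_zero_of_mul (abs_ne_zero.1 hne'))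
  rw [integral_QN fun k hk => intervalIntegrable_haarFn (Finset.mem_Icc.1 hk).1 0 t]
  calc _ ≤ ∑ k ∈ Finset.Icc 1 N, term k := Finset.abs_sum_le_sum_abs _ _
    _ = ∑ j ∈ Finset.range (N + 1), ∑ k ∈ Finset.Icc 1 N with Nat.clog 2 k = j, term k :=
        (Finset.sum_fiberwise_of_maps_to hmaps term).symm
    _ ≤ ∑ j ∈ Finset.range (N + 1), D j := Finset.sum_le_sum fun j _ => hblock j

lemma DN_le_of_forall_abs_integral_le {φ : ℕ → ℝ → ℝ} {d ε : ℕ → ℝ} {N : ℕ} {M : ℝ}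
    (hM : 0 ≤ M)
    (h : ∀ i ∈ Finset.Icc 1 (N - 1), |∫ x in (0:ℝ)..((i:ℝ)/(N:ℝ)), QN φ d ε N x| ≤ M) :
    DN φ d ε N ≤ M := by
  rcases N.eq_zero_or_pos with rfl | hN
  · simpa [DN] using hM
  have hN' : (0 : ℝ) < N := by exact_mod_cast hN
  have hcard : ((Finset.Icc 1 (N - 1)).card : ℝ) ≤ N := by
    rw [Nat.card_Icc]
    exact_mod_cast (by omega : N - 1 + 1 - 1 ≤ N)
  calc DN φ d ε N ≤ 1 / (N : ℝ) * ((Finset.Icc 1 (N - 1)).card • M) :=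
        mul_le_mul_of_nonneg_left (Finset.sum_le_card_nsmul _ _ _ h) (by positivity)
    _ ≤ 1 / (N : ℝ) * (N * M) := by
        rw [nsmul_eq_mul]
        gcongr
    _ = M := by field_simp

theorem statement2 (δ : ℝ) (hδ : 0 < δ) :
    ∃ M > (0:ℝ), ∀ N : ℕ, 2 ≤ N → ∀ ε : ℕ → ℝ,
      (∀ n, ε n = -1 ∨ ε n = 0 ∨ ε n = 1) →
      DN haarFn (fun k => 1 / Real.log ((k:ℝ) + 1) ^ ((1:ℝ) + δ)) ε N ≤ M := by
  set D : ℕ → ℝ := fun j => (2 / Real.log 2) ^ ((1:ℝ) + δ) / ((j : ℝ) + 1) ^ ((1:ℝ) + δ)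
  have hlog2 : 0 < Real.log 2 := Real.log_pos one_lt_two
  have hD : ∀ j, 0 < D j := fun j => by positivity
  have hsum : Summable D := by
    have := (Real.summable_one_div_nat_add_rpow 1 (1 + δ)).2 (by linarith)
    refine (this.mul_left ((2 / Real.log 2) ^ ((1:ℝ) + δ))).congr fun j => ?_
    rw [abs_of_pos (by positivity)]
    ring
  refine ⟨∑' j, D j, hsum.tsum_pos (fun j => (hD j).le) 0 (hD 0), fun N _ ε hε => ?_⟩
  have hε_abs : ∀ n, |ε n| ≤ 1 := fun n => by rcases hε n with h | h | h <;> simp [h]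
  refine DN_le_of_forall_abs_integral_le (tsum_nonneg fun j => (hD j).le) fun i hi => ?_
  have hiN : i ≤ N := by have := Finset.mem_Icc.1 hi; omega
  calc _ ≤ ∑ j ∈ Finset.range (N + 1), D j :=
        abs_integral_QN_haarFn_le (fun j => (hD j).le)
          (fun k hk => abs_one_div_log_rpow_le hk (by linarith)) hε_abs (by positivity)
          (div_le_one_of_le₀ (by exact_mod_cast hiN) (Nat.cast_nonneg N)) N
    _ ≤ ∑' j, D j := hsum.sum_le_tsum _ fun j _ => (hD j).le
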